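/- For the conjugation action of SL(2,ℝ) on itself, the tangent curve Φ_p(t) = exp(tV) p exp(−tV) with V = αX + βY + γZ satisfies: −det(Φ_p'(0)) = (β² + 4α²)p₂₁² when p is a rotation K_θ with sin θ ≠ 0 (in particular this quantity is ≥ 0, so the conjugacy orbit of an elliptic element of the form K_θ is space-like with respect to the bi-invariant Lorentzian metric −det). -/
import Mathlib


open Matrix

noncomputable section

local notation "M2" => Matrix (Fin 2) (Fin 2) ℝ

/-- X = E₁₁ − E₂₂ -/
def Xm : M2 := !![1, 0; 0, -1]
/-- Y = E₁₂ -/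
def Ym : M2 := !![0, 1; 0, 0]
/-- Z = E₂₁ − E₁₂ -/
def Zm : M2 := !![0, -1; 1, 0]
/-- K_θ = cos(θ)I + sin(θ)(E₂₁ − E₁₂) -/
def Km (θ : ℝ) : M2 := !![Real.cos θ, -Real.sin θ; Real.sin θ, Real.cos θ]

/-- For the conjugation action of SL(2,ℝ) on itself and `p = K_θ` with `sin θ ≠ 0`:
with `V = αX + βY + γZ`, the tangent vector `Φ_p'(0) = Vp − pV` satisfies
`−det(Vp − pV) = (β² + 4α²)p₂₁² ≥ 0`, so the conjugacy orbit of such an elliptic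
element is space-like for the bi-invariant Lorentzian metric `−det`. -/
theorem elliptic_orbit_spacelike (θ α β γ : ℝ) (hθ : Real.sin θ ≠ 0) :
    -Matrix.det ((α • Xm + β • Ym + γ • Zm) * Km θ - Km θ * (α • Xm + β • Ym + γ • Zm)) =
      (β ^ 2 + 4 * α ^ 2) * (Km θ 1 0) ^ 2 ∧
    0 ≤ (β ^ 2 + 4 * α ^ 2) * (Km θ 1 0) ^ 2 := by
  constructor
  · simp only [Xm, Ym, Zm, Km, Matrix.smul_of, Matrix.smul_cons, smul_eq_mul,
      Matrix.smul_empty]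
    rw [show (!![Real.cos θ, -Real.sin θ; Real.sin θ, Real.cos θ] : M2) 1 0 = Real.sin θ by simp]
    simp [Matrix.mul_fin_two, Matrix.det_fin_two_of]
    ring
  · positivity
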